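/- For each sign α ∈ {−1,1}, the squaring map σ_α : O₂(α) → O₂(+1) defined by σ_α(z,t) = (z², t) is a surjective group homomorphism whose kernel is exactly the two-element set {(1,0̂), (−1,0̂)}. -/

import Mathlib

set_option linter.unnecessarySeqFocus false

open Complex

/-- Complex conjugation as a group endomorphism of the circle group. -/
noncomputable def conjC : Circle →* Circle where
  toFun z := ⟨(starRingEnd ℂ) (z : ℂ), by
    simp only [Submonoid.unitSphere, Metric.mem_sphere, dist_zero_right]
    simp [Circle.norm_coe]⟩
  map_one' := by ext; simp
  map_mul' a b := by ext; simp; rfl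

@[simp] lemma conjC_coe (z : Circle) : (conjC z : ℂ) = (starRingEnd ℂ) (z : ℂ) := rfl

@[simp] lemma conjC_conjC (z : Circle) : conjC (conjC z) = z := by
  ext; simp

/-- The element `-1` of the circle group. -/
noncomputable def negOneC : Circle := ⟨-1, by
  simp only [Submonoid.unitSphere, Metric.mem_sphere, dist_zero_right]
  simp⟩

@[simp] lemma negOneC_coe : (negOneC : ℂ) = -1 := rfl

/-- The sign `α = ±1` as an element of the circle group. -/
noncomputable def sgnC (α : ℤˣ) : Circle := if α = 1 then 1 else negOneC

/-- The underlying type of a twisted extension of `ℤ₂ = {0̂, 1̂}` by a commutative group `A`,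
with twisting endomorphism `τ` and cocycle value `a₀`.  An element `⟨z, t⟩` stands for the
pair `(z, t)`.  The group `O₂(α)` of the paper is the case `A = Circle`, `τ` = complex
conjugation, `a₀ = α = ±1`. -/
@[ext]
structure Tw (A : Type*) [CommGroup A] (τ : A →* A) (a₀ : A) where
  z : A
  t : ZMod 2

namespace Tw

variable {A : Type*} [CommGroup A] {τ : A →* A} {a₀ : A}

/-- The multiplication `(z₁,0̂)(z₂,t) = (z₁z₂, t)`, `(z₁,1̂)(z₂,0̂) = (z₁·τ(z₂), 1̂)`,
`(z₁,1̂)(z₂,1̂) = (a₀·z₁·τ(z₂), 0̂)`. -/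
instance : Mul (Tw A τ a₀) :=
  ⟨fun g h => ⟨(if g.t = 1 ∧ h.t = 1 then a₀ else 1) * g.z * (if g.t = 1 then τ h.z else h.z),
    g.t + h.t⟩⟩

/-- The unit `(1, 0̂)`. -/
instance : One (Tw A τ a₀) := ⟨⟨1, 0⟩⟩

instance : Inv (Tw A τ a₀) := ⟨fun g => ⟨if g.t = 1 then a₀⁻¹ * τ g.z⁻¹ else g.z⁻¹, g.t⟩⟩

@[simp] lemma mul_z (g h : Tw A τ a₀) :
    (g * h).z = (if g.t = 1 ∧ h.t = 1 then a₀ else 1) * g.z * (if g.t = 1 then τ h.z else h.z) :=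
  rfl

@[simp] lemma mul_t (g h : Tw A τ a₀) : (g * h).t = g.t + h.t := rfl

@[simp] lemma one_z : (1 : Tw A τ a₀).z = 1 := rfl
@[simp] lemma one_t : (1 : Tw A τ a₀).t = 0 := rfl

@[simp] lemma inv_z (g : Tw A τ a₀) :
    (g⁻¹).z = if g.t = 1 then a₀⁻¹ * τ g.z⁻¹ else g.z⁻¹ := rfl
@[simp] lemma inv_t (g : Tw A τ a₀) : (g⁻¹).t = g.t := rfl

lemma zmod2_cases : ∀ t : ZMod 2, t = 0 ∨ t = 1 := by decide

instance group [Fact (∀ a : A, τ (τ a) = a)] [Fact (τ a₀ = a₀)] : Group (Tw A τ a₀) := by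
  have hττ := Fact.out (p := ∀ a : A, τ (τ a) = a)
  have hτa := Fact.out (p := τ a₀ = a₀)
  refine Group.ofLeftAxioms ?_ ?_ ?_
  · rintro ⟨z₁, t₁⟩ ⟨z₂, t₂⟩ ⟨z₃, t₃⟩
    rcases zmod2_cases t₁ with rfl | rfl <;> rcases zmod2_cases t₂ with rfl | rfl <;>
      rcases zmod2_cases t₃ with rfl | rfl <;> ext <;>
      simp [hττ, hτa, map_mul, mul_comm, mul_assoc, mul_left_comm] <;> decide
  · rintro ⟨z, t⟩
    ext <;> simp
  · rintro ⟨z, t⟩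
    rcases zmod2_cases t with rfl | rfl <;> ext <;>
      simp [hττ, hτa, map_mul, mul_comm, mul_assoc, mul_left_comm] <;> decide

end Tw

instance : Fact (∀ a : Circle, conjC (conjC a) = a) := ⟨conjC_conjC⟩

instance (α : ℤˣ) : Fact (conjC (sgnC α) = sgnC α) := ⟨by
  rcases Int.units_eq_one_or α with rfl | rfl <;> ext <;> simp [sgnC, negOneC_coe]⟩

/-- The group `O₂(α)` for a sign `α ∈ {−1, 1}`: underlying set `Circle × ℤ₂` with the
twisted multiplication `(z₁,0̂)(z₂,t) = (z₁z₂,t)`, `(z₁,1̂)(z₂,0̂) = (z₁·conj(z₂),1̂)`,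
`(z₁,1̂)(z₂,1̂) = (α·z₁·conj(z₂),0̂)` and unit `(1,0̂)`. -/
abbrev O2 (α : ℤˣ) : Type := Tw Circle conjC (sgnC α)

/-! An endomorphism `φ` of `A` that commutes with `τ` and sends `a₀` to `b₀` respects all four
cases of the multiplication, so `(z, t) ↦ (φ z, t)` is a homomorphism `Tw A τ a₀ → Tw A τ b₀`;
it is onto when `φ` is, and its kernel is `ker φ × {0̂}`. Squaring on the circle commutes with
conjugation, sends `α` to `α² = 1`, is onto (halve the argument) and has kernel `{1, -1}`. -/

namespace Tw

variable {A : Type*} [CommGroup A] {τ : A →* A} {a₀ b₀ : A}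
  [Fact (∀ a : A, τ (τ a) = a)] [Fact (τ a₀ = a₀)] [Fact (τ b₀ = b₀)]

def map (φ : A →* A) (hφτ : ∀ a, φ (τ a) = τ (φ a)) (hφa₀ : φ a₀ = b₀) :
    Tw A τ a₀ →* Tw A τ b₀ where
  toFun g := ⟨φ g.z, g.t⟩
  map_one' := by ext <;> simp
  map_mul' := by
    rintro ⟨z₁, t₁⟩ ⟨z₂, t₂⟩
    rcases zmod2_cases t₁ with rfl | rfl <;> rcases zmod2_cases t₂ with rfl | rfl <;>
      ext <;> simp [hφτ, hφa₀]

variable {φ : A →* A} {hφτ : ∀ a, φ (τ a) = τ (φ a)} {hφa₀ : φ a₀ = b₀}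

@[simp] lemma map_apply (g : Tw A τ a₀) : map φ hφτ hφa₀ g = ⟨φ g.z, g.t⟩ := rfl

lemma map_surjective (hφ : Function.Surjective φ) :
    Function.Surjective (map φ hφτ hφa₀) := by
  rintro ⟨w, t⟩
  obtain ⟨z, rfl⟩ := hφ w
  exact ⟨⟨z, t⟩, rfl⟩

lemma coe_ker_map :
    ((map φ hφτ hφa₀).ker : Set (Tw A τ a₀)) = (fun z => ⟨z, 0⟩) '' (φ.ker : Set A) := by
  ext ⟨z, t⟩
  simp only [SetLike.mem_coe, MonoidHom.mem_ker, map_apply, Set.mem_image, Tw.mk.injEq]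
  constructor
  · intro h
    exact ⟨z, congrArg Tw.z h, rfl, (congrArg Tw.t h).symm⟩
  · rintro ⟨z, hz, rfl, rfl⟩
    ext <;> simp [hz]

end Tw

lemma Circle.sq_surjective : Function.Surjective fun z : Circle => z ^ 2 := fun w =>
  ⟨Circle.exp (Complex.arg w / 2), by
    simp only [sq, ← Circle.exp_add, add_halves, Circle.exp_arg]⟩

lemma Circle.sq_eq_one_iff {z : Circle} : z ^ 2 = 1 ↔ z = 1 ∨ z = negOneC := by
  simp only [sq, Circle.ext_iff, Circle.coe_mul, Circle.coe_one, negOneC_coe,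
    mul_self_eq_one_iff]

lemma sgnC_sq (α : ℤˣ) : sgnC α ^ 2 = sgnC 1 := by
  rcases Int.units_eq_one_or α with rfl | rfl <;> ext <;> simp [sgnC, sq]

/-- For each sign `α`, the squaring map `σ_α(z,t) = (z², t)` is a surjective group
homomorphism `O₂(α) → O₂(+1)` with kernel exactly `{(1,0̂), (−1,0̂)}`. -/
theorem O2_squaring_morphism (α : ℤˣ) :
    ∃ σ : O2 α →* O2 1,
      (∀ g : O2 α, σ g = ⟨g.z ^ 2, g.t⟩) ∧
      Function.Surjective σ ∧
      ((σ.ker : Set (O2 α)) = {(⟨1, 0⟩ : O2 α), ⟨negOneC, 0⟩}) := by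
  have hker : ((powMonoidHom 2 : Circle →* Circle).ker : Set Circle) = {1, negOneC} := by
    ext z
    exact Circle.sq_eq_one_iff
  refine ⟨Tw.map (powMonoidHom 2) (fun a => by simp) (sgnC_sq α), fun _ => rfl,
    Tw.map_surjective Circle.sq_surjective, ?_⟩
  exact Tw.coe_ker_map.trans (by rw [hker, Set.image_pair])
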